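/- Let G be a finite group acting on k[V], let 𝒳 be a family of subgroups of G and K a subgroup with K ≤ H for all H ∈ 𝒳. Suppose there exists f ∈ k[V]^G with f ∈ I^H_K for every H ∈ 𝒳 but f ∉ I^G_K. Then the transfer ideal I^G_𝒳 annihilates the nonzero element f + I^G_K of k[V]^G / I^G_K; in particular I^G_𝒳 is contained in some associated prime of k[V]^G / I^G_K. -/

import Mathlib

set_option synthInstance.maxHeartbeats 1000000
open MvPolynomial

/-- The ring of `H`-invariants in `R`. -/
def invSub (G R : Type) [Group G] [CommRing R] [MulSemiringAction G R]
    (H : Subgroup G) : Subring R where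
  carrier := {f : R | ∀ h : H, (h : G) • f = f}
  mul_mem' := fun ha hb h => by rw [smul_mul', ha h, hb h]
  one_mem' := fun h => smul_one _
  add_mem' := fun ha hb h => by rw [smul_add, ha h, hb h]
  zero_mem' := fun h => smul_zero _
  neg_mem' := fun ha h => by rw [smul_neg, (ha h : _)]

/-- The relative transfer `Tr^H_K`, summing over representatives of `H/K`. -/
noncomputable def relTransfer (G R : Type) [Group G] [Finite G] [CommRing R]
    [MulSemiringAction G R] (H K : Subgroup G) (f : R) : R :=
  haveI : Fintype (H ⧸ K.subgroupOf H) := Fintype.ofFinite _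
  ∑ c : H ⧸ K.subgroupOf H, ((Quotient.out c : H) : G) • f

/-- The transfer ideal `I^H_K = Tr^H_K(k[V]^K)·k[V]^H` of `k[V]^H`. -/
noncomputable def transferIdeal (G R : Type) [Group G] [Finite G] [CommRing R]
    [MulSemiringAction G R] (H K : Subgroup G) : Ideal (invSub G R H) :=
  Ideal.span {y | ∃ f : R, (∀ x : K, (x : G) • f = f) ∧ (y : R) = relTransfer G R H K f}

/-- The transfer ideal `I^G_𝒳 = Σ_{H ∈ 𝒳} Tr^G_H(k[V]^H)` of `k[V]^G`. -/
noncomputable def transferIdealFamily (G R : Type) [Group G] [Finite G] [CommRing R]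
    [MulSemiringAction G R] (𝓧 : Set (Subgroup G)) : Ideal (invSub G R ⊤) :=
  Ideal.span {y | ∃ H ∈ 𝓧, ∃ f : R, (∀ x : H, (x : G) • f = f) ∧
    (y : R) = relTransfer G R ⊤ H f}

/-!
If `f = Tr^H_K(u)` with `u ∈ k[V]^K` and `g ∈ k[V]^H`, then
`Tr^G_H(g) · f = Tr^G_H(g · Tr^H_K(u)) = Tr^G_H(Tr^H_K(g u)) = Tr^G_K(g u) ∈ I^G_K`;
transitivity of the transfer comes from the bijection `G/H × H/K → G/K`, `(c, d) ↦ c d`.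
Hence `I^G_𝒳` lies in the colon ideal `(I^G_K : f)`, the annihilator of `f + I^G_K`. Since the
invariant ring `k[V]^G` is Noetherian, that annihilator lies in an associated prime of
`k[V]^G / I^G_K`.
-/

section QuotientTower

variable {G : Type} [Group G]

noncomputable def quotientTowerMap {K H L : Subgroup G} (hHL : H ≤ L) :
    (L ⧸ H.subgroupOf L) × (H ⧸ K.subgroupOf H) → L ⧸ K.subgroupOf L :=
  fun p => (p.1.out * Subgroup.inclusion hHL p.2.out : L)

theorem quotientTowerMap_surjective {K H L : Subgroup G} (hHL : H ≤ L) :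
    Function.Surjective (quotientTowerMap (K := K) hHL) := by
  intro e
  induction e using QuotientGroup.induction_on with | H x => ?_
  set c : L ⧸ H.subgroupOf L := QuotientGroup.mk x
  have hc : c.out⁻¹ * x ∈ H.subgroupOf L := QuotientGroup.eq.mp (QuotientGroup.out_eq' c)
  set d : H ⧸ K.subgroupOf H := QuotientGroup.mk (⟨_, hc⟩ : H)
  have hd : d.out⁻¹ * ⟨_, hc⟩ ∈ K.subgroupOf H := QuotientGroup.eq.mp (QuotientGroup.out_eq' d)
  refine ⟨(c, d), QuotientGroup.eq.mpr ?_⟩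
  simpa [Subgroup.mem_subgroupOf, mul_assoc] using hd

variable [Finite G] in
theorem quotientTowerMap_bijective {K H L : Subgroup G} (hKH : K ≤ H) (hHL : H ≤ L) :
    Function.Bijective (quotientTowerMap (K := K) hHL) := by
  refine (quotientTowerMap_surjective hHL).bijective_of_nat_card_le (le_of_eq ?_)
  rw [Nat.card_prod]
  exact (mul_comm _ _).trans (Subgroup.relIndex_mul_relIndex _ _ _ hKH hHL)

end QuotientTower

section Transfer

variable {G R : Type} [Group G] [CommRing R] [MulSemiringAction G R]

theorem invSub_antitone : Antitone (invSub G R) :=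
  fun _ _ hHL _ hf h => hf ⟨h, hHL h.2⟩

theorem out_smul_of_mem_invSub {K L : Subgroup G} {w : R} (hw : w ∈ invSub G R K) (x : L) :
    (((QuotientGroup.mk x : L ⧸ K.subgroupOf L).out : L) : G) • w = (x : G) • w := by
  obtain ⟨h, hh⟩ := QuotientGroup.mk_out_eq_mul (K.subgroupOf L) x
  rw [hh, Subgroup.coe_mul, mul_smul]
  exact congrArg _ (hw ⟨_, h.2⟩)

variable [Finite G]

theorem relTransfer_eq_sum (L K : Subgroup G) [Fintype (L ⧸ K.subgroupOf L)] (w : R) :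
    relTransfer G R L K w = ∑ c : L ⧸ K.subgroupOf L, ((c.out : L) : G) • w := by
  unfold relTransfer
  congr!

theorem relTransfer_zero (L K : Subgroup G) : relTransfer G R L K 0 = 0 := by
  simp [relTransfer]

theorem relTransfer_add (L K : Subgroup G) (u v : R) :
    relTransfer G R L K (u + v) = relTransfer G R L K u + relTransfer G R L K v := by
  simp [relTransfer, Finset.sum_add_distrib]

theorem relTransfer_mul_of_mem_invSub {L : Subgroup G} (K : Subgroup G) {v : R}
    (hv : v ∈ invSub G R L) (w : R) :
    relTransfer G R L K (w * v) = relTransfer G R L K w * v := by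
  simp only [relTransfer, Finset.sum_mul, smul_mul', hv _]

theorem relTransfer_relTransfer {K H L : Subgroup G} (hKH : K ≤ H) (hHL : H ≤ L) {w : R}
    (hw : w ∈ invSub G R K) :
    relTransfer G R L H (relTransfer G R H K w) = relTransfer G R L K w := by
  have : Fintype (L ⧸ H.subgroupOf L) := Fintype.ofFinite _
  have : Fintype (H ⧸ K.subgroupOf H) := Fintype.ofFinite _
  have : Fintype (L ⧸ K.subgroupOf L) := Fintype.ofFinite _
  simp only [relTransfer_eq_sum, Finset.smul_sum, ← mul_smul]
  rw [← Fintype.sum_prod_type']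
  refine Fintype.sum_bijective _ (quotientTowerMap_bijective hKH hHL) _ _ fun p => ?_
  rw [quotientTowerMap, out_smul_of_mem_invSub hw]
  rfl

theorem mem_transferIdeal_iff {K H : Subgroup G} (hKH : K ≤ H) {x : invSub G R H} :
    x ∈ transferIdeal G R H K ↔ ∃ u ∈ invSub G R K, relTransfer G R H K u = x := by
  refine ⟨fun hx => ?_, fun ⟨u, hu, hx⟩ => Ideal.subset_span ⟨u, hu, hx.symm⟩⟩
  induction hx using Submodule.span_induction with
  | mem y hy => obtain ⟨u, hu, hy⟩ := hy; exact ⟨u, hu, hy.symm⟩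
  | zero => exact ⟨0, zero_mem _, relTransfer_zero H K⟩
  | add y z _ _ hy hz =>
    obtain ⟨u, hu, huy⟩ := hy
    obtain ⟨v, hv, hvz⟩ := hz
    exact ⟨u + v, add_mem hu hv, by rw [relTransfer_add, huy, hvz, Subring.coe_add]⟩
  | smul a y _ hy =>
    obtain ⟨u, hu, huy⟩ := hy
    refine ⟨u * a, mul_mem hu (invSub_antitone hKH a.2), ?_⟩
    rw [relTransfer_mul_of_mem_invSub K a.2, huy, mul_comm, smul_eq_mul, Subring.coe_mul]

theorem relTransfer_mul_mem_transferIdeal {K H L : Subgroup G} (hKH : K ≤ H) (hHL : H ≤ L)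
    {x : invSub G R H} (hx : x ∈ transferIdeal G R H K) {v : R} (hv : v ∈ invSub G R H)
    {z : invSub G R L} (hz : (z : R) = relTransfer G R L H (x * v)) :
    z ∈ transferIdeal G R L K := by
  obtain ⟨u, hu, hux⟩ := (mem_transferIdeal_iff hKH).mp hx
  refine (mem_transferIdeal_iff (hKH.trans hHL)).mpr
    ⟨u * v, mul_mem hu (invSub_antitone hKH hv), ?_⟩
  rw [hz, ← hux, ← relTransfer_mul_of_mem_invSub K hv,
    relTransfer_relTransfer hKH hHL (mul_mem hu (invSub_antitone hKH hv))]

theorem transferIdealFamily_le_colon {𝓧 : Set (Subgroup G)} {K : Subgroup G}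
    (hK : ∀ H ∈ 𝓧, K ≤ H) {F : invSub G R ⊤}
    (hF : ∀ H ∈ 𝓧, Subring.inclusion (invSub_antitone le_top) F ∈ transferIdeal G R H K) :
    transferIdealFamily G R 𝓧 ≤ (transferIdeal G R ⊤ K).colon {F} := by
  refine Ideal.span_le.mpr ?_
  rintro y ⟨H, hH, g, hg, hy⟩
  refine Submodule.mem_colon_singleton.mpr
    (relTransfer_mul_mem_transferIdeal (hK H hH) le_top (hF H hH) hg ?_)
  change (y : R) * F = _
  rw [hy, ← relTransfer_mul_of_mem_invSub H F.2, mul_comm]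
  rfl

end Transfer

section Noetherian

variable {k A G : Type} [CommRing k] [CommRing A] [Algebra k A] [Group G] [Finite G]
  [MulSemiringAction G A] [SMulCommClass G k A]

instance : Algebra.IsInvariant (FixedPoints.subalgebra k A G) A G :=
  ⟨fun b hb => ⟨⟨b, hb⟩, rfl⟩⟩

/-- Noether's finiteness theorem, via Artin–Tate: `A` is integral, hence module-finite, over its
invariants. -/
theorem FixedPoints.finiteType_subalgebra [IsNoetherianRing k] [Algebra.FiniteType k A] :
    Algebra.FiniteType k (FixedPoints.subalgebra k A G) := by
  have := Algebra.IsInvariant.isIntegral (FixedPoints.subalgebra k A G) A G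
  have := Algebra.FiniteType.of_restrictScalars_finiteType k (FixedPoints.subalgebra k A G) A
  have : Module.Finite (FixedPoints.subalgebra k A G) A := Algebra.IsIntegral.finite
  exact ⟨fg_of_fg_of_fg k _ A Algebra.FiniteType.out Module.Finite.fg_top Subtype.val_injective⟩

theorem isNoetherianRing_invSub_top [IsNoetherianRing k] [Algebra.FiniteType k A] :
    IsNoetherianRing (invSub G A ⊤) :=
  have := FixedPoints.finiteType_subalgebra (k := k) (A := A) (G := G)
  have := Algebra.FiniteType.isNoetherianRing k (FixedPoints.subalgebra k A G)
  isNoetherianRing_of_ringEquiv _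
    (RingEquiv.subringCongr (R := A) (s := (FixedPoints.subalgebra k A G).toSubring)
      (t := invSub G A ⊤) (Subring.ext fun _ => ⟨fun h g => h g, fun h g => h ⟨g, trivial⟩⟩))

end Noetherian

theorem Ideal.exists_isAssociatedPrime_quotient_le {B : Type} [CommRing B] [IsNoetherianRing B]
    {I J : Ideal B} {x : B} (hx : x ∉ J) (hI : I ≤ J.colon {x}) :
    ∃ P : Ideal B, IsAssociatedPrime P (B ⧸ J) ∧ I ≤ P := by
  obtain ⟨P, hP, hle⟩ := exists_le_isAssociatedPrime_of_isNoetherianRing B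
    (Ideal.Quotient.mk J x) (mt Ideal.Quotient.eq_zero_iff_mem.mp hx)
  refine ⟨P, hP, fun a ha => hle ?_⟩
  rw [Submodule.mem_colon_singleton, Submodule.mem_bot, Algebra.smul_def,
    Ideal.Quotient.algebraMap_eq, ← map_mul, Ideal.Quotient.eq_zero_iff_mem]
  exact Submodule.mem_colon_singleton.mp (hI ha)

theorem transferIdealFamily_le_associatedPrime_general
    (k : Type) [Field k] (n : ℕ)
    (G : Type) [Group G] [Fintype G]
    [MulSemiringAction G (MvPolynomial (Fin n) k)]
    [SMulCommClass G k (MvPolynomial (Fin n) k)]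
    (𝓧 : Set (Subgroup G)) (K : Subgroup G) (hK : ∀ H ∈ 𝓧, K ≤ H)
    (f : MvPolynomial (Fin n) k) (hfG : ∀ g : G, g • f = f)
    (hfin : ∀ H ∈ 𝓧, (⟨f, fun x => hfG x⟩ : invSub G (MvPolynomial (Fin n) k) H) ∈
      transferIdeal G (MvPolynomial (Fin n) k) H K)
    (hfout : (⟨f, fun x => hfG x⟩ : invSub G (MvPolynomial (Fin n) k) ⊤) ∉
      transferIdeal G (MvPolynomial (Fin n) k) ⊤ K) :
    (Ideal.Quotient.mk (transferIdeal G (MvPolynomial (Fin n) k) ⊤ K)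
        (⟨f, fun x => hfG x⟩ : invSub G (MvPolynomial (Fin n) k) ⊤) ≠ 0) ∧
    (∀ a ∈ transferIdealFamily G (MvPolynomial (Fin n) k) 𝓧,
      a * (⟨f, fun x => hfG x⟩ : invSub G (MvPolynomial (Fin n) k) ⊤) ∈
        transferIdeal G (MvPolynomial (Fin n) k) ⊤ K) ∧
    ∃ P : Ideal (invSub G (MvPolynomial (Fin n) k) ⊤),
      IsAssociatedPrime P ((invSub G (MvPolynomial (Fin n) k) ⊤) ⧸
        transferIdeal G (MvPolynomial (Fin n) k) ⊤ K) ∧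
      transferIdealFamily G (MvPolynomial (Fin n) k) 𝓧 ≤ P := by
  have hcolon := transferIdealFamily_le_colon hK (F := ⟨f, fun x => hfG x⟩) hfin
  have := isNoetherianRing_invSub_top (k := k) (A := MvPolynomial (Fin n) k) (G := G)
  exact ⟨mt Ideal.Quotient.eq_zero_iff_mem.mp hfout,
    fun a ha => Submodule.mem_colon_singleton.mp (hcolon ha),
    Ideal.exists_isAssociatedPrime_quotient_le hfout hcolon⟩

/-- if `K ≤ H` for all `H ∈ 𝒳` and `f ∈ k[V]^G` lies in `I^H_K` for
every `H ∈ 𝒳` but not in `I^G_K`, then `I^G_𝒳` annihilates the nonzero element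
`f + I^G_K` of `k[V]^G / I^G_K`, and `I^G_𝒳` is contained in some associated
prime of `k[V]^G / I^G_K`. -/
theorem transferIdealFamily_le_associatedPrime
    (k : Type) [Field k] (n : ℕ)
    (G : Type) [Group G] [Fintype G]
    [MulSemiringAction G (MvPolynomial (Fin n) k)]
    [SMulCommClass G k (MvPolynomial (Fin n) k)]
    (hlin : ∀ (σ : G) (i : Fin n), (σ • (X i : MvPolynomial (Fin n) k)).IsHomogeneous 1)
    (𝓧 : Set (Subgroup G)) (K : Subgroup G) (hK : ∀ H ∈ 𝓧, K ≤ H)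
    (f : MvPolynomial (Fin n) k) (hfG : ∀ g : G, g • f = f)
    (hfin : ∀ H ∈ 𝓧, (⟨f, fun x => hfG x⟩ : invSub G (MvPolynomial (Fin n) k) H) ∈
      transferIdeal G (MvPolynomial (Fin n) k) H K)
    (hfout : (⟨f, fun x => hfG x⟩ : invSub G (MvPolynomial (Fin n) k) ⊤) ∉
      transferIdeal G (MvPolynomial (Fin n) k) ⊤ K) :
    (Ideal.Quotient.mk (transferIdeal G (MvPolynomial (Fin n) k) ⊤ K)
        (⟨f, fun x => hfG x⟩ : invSub G (MvPolynomial (Fin n) k) ⊤) ≠ 0) ∧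
    (∀ a ∈ transferIdealFamily G (MvPolynomial (Fin n) k) 𝓧,
      a * (⟨f, fun x => hfG x⟩ : invSub G (MvPolynomial (Fin n) k) ⊤) ∈
        transferIdeal G (MvPolynomial (Fin n) k) ⊤ K) ∧
    ∃ P : Ideal (invSub G (MvPolynomial (Fin n) k) ⊤),
      IsAssociatedPrime P ((invSub G (MvPolynomial (Fin n) k) ⊤) ⧸
        transferIdeal G (MvPolynomial (Fin n) k) ⊤ K) ∧
      transferIdealFamily G (MvPolynomial (Fin n) k) 𝓧 ≤ P :=
  transferIdealFamily_le_associatedPrime_general k n G 𝓧 K hK f hfG hfin hfout
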